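/- The polymomentum electromagnetic field of the autonomous multi-time Hamilton space of electrodynamics is given, at every point (t,x,p), by F^{(i)}_{(a)j} := (1/2)[Δ^{(i)}_{(a)j} − Δ^{(j)}_{(a)i}] = (e/(8m₀²c)) 𝒜_{{i,j}} { h_{af} φ^{ir} [ A^{(f)}_{(r):j} + A^{(f)}_{(j):r} ] }, where 𝒜_{{i,j}} denotes the alternating sum (the expression minus the same expression with i and j interchanged), and the second electromagnetic component vanishes: f^{(i)(j)}_{(a)(b)} := (1/2)[ϑ^{(i)(j)}_{(a)(b)} − ϑ^{(j)(i)}_{(a)(b)}] = 0, where ϑ^{(i)(j)}_{(a)(b)} = (1/(4m₀c)) h_{ab} φ^{ij}. -/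
import Mathlib


open scoped BigOperators
open Set

noncomputable section

/-- Partial derivative of a real-valued function on `ℝ^k` in the `a`-th coordinate direction. -/
def pd {k : ℕ} (f : (Fin k → ℝ) → ℝ) (a : Fin k) (t : Fin k → ℝ) : ℝ :=
  fderiv ℝ f t (Pi.single a 1)

/-- The Christoffel symbols `χ^a_{bc}` of a (semi-)Riemannian metric `g`. -/
def christoffel {k : ℕ} (g : (Fin k → ℝ) → Matrix (Fin k) (Fin k) ℝ)
    (a b c : Fin k) (t : Fin k → ℝ) : ℝ :=
  (1 / 2) * ∑ d, (g t)⁻¹ a d *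
    (pd (fun s => g s d c) b t + pd (fun s => g s b d) c t - pd (fun s => g s b c) d t)

/-- The curvature tensor `χ^f_{g a b}` of a (semi-)Riemannian metric. -/
def curvTensor {k : ℕ} (g : (Fin k → ℝ) → Matrix (Fin k) (Fin k) ℝ)
    (f gi a b : Fin k) (t : Fin k → ℝ) : ℝ :=
  pd (christoffel g f b gi) a t - pd (christoffel g f a gi) b t
    + ∑ hh, christoffel g f a hh t * christoffel g hh b gi t
    - ∑ hh, christoffel g f b hh t * christoffel g hh a gi t

/-- The Ricci tensor `χ_{ab} = χ^f_{abf}`. -/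
def ricci {k : ℕ} (g : (Fin k → ℝ) → Matrix (Fin k) (Fin k) ℝ)
    (a b : Fin k) (t : Fin k → ℝ) : ℝ :=
  ∑ f, curvTensor g f a b f t

/-- The scalar curvature `g^{ab} Ric_{ab}`. -/
def scalarCurv {k : ℕ} (g : (Fin k → ℝ) → Matrix (Fin k) (Fin k) ℝ)
    (t : Fin k → ℝ) : ℝ :=
  ∑ a, ∑ b, (g t)⁻¹ a b * ricci g a b t

/-- Partial derivative in a temporal direction of a function on `T × X`. -/
def pdt {m n : ℕ} (f : (Fin m → ℝ) × (Fin n → ℝ) → ℝ) (a : Fin m)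
    (q : (Fin m → ℝ) × (Fin n → ℝ)) : ℝ :=
  fderiv ℝ f q (Pi.single a 1, 0)

/-- Partial derivative in a spatial direction of a function on `T × X`. -/
def pdx {m n : ℕ} (f : (Fin m → ℝ) × (Fin n → ℝ) → ℝ) (i : Fin n)
    (q : (Fin m → ℝ) × (Fin n → ℝ)) : ℝ :=
  fderiv ℝ f q (0, Pi.single i 1)

/-- The local model of the dual 1-jet space: coordinates `(t^a, x^i, p^a_i)`. -/
abbrev Jet (m n : ℕ) := (Fin m → ℝ) × (Fin n → ℝ) × (Fin m → Fin n → ℝ)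

/-- `∂/∂t^a` on the dual 1-jet space. -/
def pdtJ {m n : ℕ} (F : Jet m n → ℝ) (a : Fin m) (q : Jet m n) : ℝ :=
  fderiv ℝ F q (Pi.single a 1, 0, 0)

/-- `∂/∂x^i` on the dual 1-jet space. -/
def pdxJ {m n : ℕ} (F : Jet m n → ℝ) (i : Fin n) (q : Jet m n) : ℝ :=
  fderiv ℝ F q (0, Pi.single i 1, 0)

/-- `∂/∂p^f_r` on the dual 1-jet space. -/
def pdpJ {m n : ℕ} (F : Jet m n → ℝ) (f : Fin m) (r : Fin n) (q : Jet m n) : ℝ :=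
  fderiv ℝ F q (0, 0, Pi.single f (Pi.single r 1))

/-- The temporal component `N₁_{(i)b}^{(a)} = χ^a_{bf} p^f_i` of the canonical
nonlinear connection. -/
def N1 {m n : ℕ} (h : (Fin m → ℝ) → Matrix (Fin m) (Fin m) ℝ)
    (a : Fin m) (i : Fin n) (b : Fin m) (q : Jet m n) : ℝ :=
  ∑ f, christoffel h a b f q.1 * q.2.2 f i

/-- The spatial component
`N₂_{(i)j}^{(a)} = γ^r_{ij}[(2e/m₀) A^{(a)}_{(r)} − p^a_r] − (e/m₀)[∂A^{(a)}_{(i)}/∂x^j + ∂A^{(a)}_{(j)}/∂x^i]`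
of the canonical nonlinear connection. -/
def N2 {m n : ℕ} (φ : (Fin n → ℝ) → Matrix (Fin n) (Fin n) ℝ)
    (A : Fin m → Fin n → (Fin m → ℝ) × (Fin n → ℝ) → ℝ) (e m₀ : ℝ)
    (a : Fin m) (i j : Fin n) (q : Jet m n) : ℝ :=
  ∑ r, christoffel φ r i j q.2.1 * ((2 * e / m₀) * A a r (q.1, q.2.1) - q.2.2 a r)
    - (e / m₀) * (pdx (A a i) j (q.1, q.2.1) + pdx (A a j) i (q.1, q.2.1))

/-- The adapted derivation `δ/δt^a = ∂/∂t^a − N₁_{(r)a}^{(f)} ∂/∂p^f_r`. -/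
def deltaT {m n : ℕ} (h : (Fin m → ℝ) → Matrix (Fin m) (Fin m) ℝ)
    (F : Jet m n → ℝ) (a : Fin m) (q : Jet m n) : ℝ :=
  pdtJ F a q - ∑ f, ∑ r, N1 h f r a q * pdpJ F f r q

/-- The adapted derivation `δ/δx^i = ∂/∂x^i − N₂_{(r)i}^{(f)} ∂/∂p^f_r`. -/
def deltaX {m n : ℕ} (φ : (Fin n → ℝ) → Matrix (Fin n) (Fin n) ℝ)
    (A : Fin m → Fin n → (Fin m → ℝ) × (Fin n → ℝ) → ℝ) (e m₀ : ℝ)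
    (F : Jet m n → ℝ) (i : Fin n) (q : Jet m n) : ℝ :=
  pdxJ F i q - ∑ f, ∑ r, N2 φ A e m₀ f r i q * pdpJ F f r q


section Aux

variable {m n : ℕ}

/-- Derivative of the momentum-coordinate projection. -/
lemma fderiv_coordP (f : Fin m) (r : Fin n) (q v : Jet m n) :
    fderiv ℝ (fun q : Jet m n => q.2.2 f r) q v = v.2.2 f r := by
  set L : Jet m n →L[ℝ] ℝ :=
      (ContinuousLinearMap.proj r).comp ((ContinuousLinearMap.proj f).comp
        ((ContinuousLinearMap.snd ℝ (Fin n → ℝ) (Fin m → Fin n → ℝ)).comp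
          (ContinuousLinearMap.snd ℝ (Fin m → ℝ)
            ((Fin n → ℝ) × (Fin m → Fin n → ℝ))))) with hLdef
  have heq : (fun q : Jet m n => q.2.2 f r) = ⇑L := rfl
  rw [heq, L.fderiv]
  rfl

lemma deltaX_coord (φ : (Fin n → ℝ) → Matrix (Fin n) (Fin n) ℝ)
    (A : Fin m → Fin n → (Fin m → ℝ) × (Fin n → ℝ) → ℝ) (e m₀ : ℝ)
    (f : Fin m) (r : Fin n) (j : Fin n) (q : Jet m n) :
    deltaX φ A e m₀ (fun q => q.2.2 f r) j q = - N2 φ A e m₀ f r j q := by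
  unfold deltaX pdxJ pdpJ
  rw [fderiv_coordP]
  have hsum : ∀ f' : Fin m, ∀ r' : Fin n,
      fderiv ℝ (fun q : Jet m n => q.2.2 f r) q
        (0, 0, Pi.single f' (Pi.single r' 1))
        = (Pi.single f' (Pi.single r' (1:ℝ)) : Fin m → Fin n → ℝ) f r := by
    intro f' r'; rw [fderiv_coordP]
  simp only [hsum]
  have : ∀ f' : Fin m,
      (∑ r', N2 φ A e m₀ f' r' j q *
        (Pi.single f' (Pi.single r' (1:ℝ)) : Fin m → Fin n → ℝ) f r)
      = if f = f' then N2 φ A e m₀ f' r j q else 0 := by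
    intro f'
    by_cases hf : f = f'
    · subst hf
      simp [Pi.single_apply, Finset.sum_ite_eq, eq_comm]
    · simp [Pi.single_apply, Ne.symm hf, hf]
  rw [Finset.sum_congr rfl fun f' _ => this f']
  simp

/-- Symmetry of the Christoffel symbols of a symmetric metric on an open set. -/
lemma christoffel_symm {k : ℕ} (g : (Fin k → ℝ) → Matrix (Fin k) (Fin k) ℝ)
    (X : Set (Fin k → ℝ)) (hX : IsOpen X) (hsymm : ∀ x ∈ X, (g x).IsSymm)
    (s r j : Fin k) (x : Fin k → ℝ) (hx : x ∈ X) :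
    christoffel g s r j x = christoffel g s j r x := by
  unfold christoffel
  congr 1
  apply Finset.sum_congr rfl
  intro d _
  have key : ∀ a b : Fin k, ∀ e : Fin k,
      pd (fun y => g y a b) e x = pd (fun y => g y b a) e x := by
    intro a b e
    unfold pd
    have hev : (fun y => g y a b) =ᶠ[nhds x] (fun y => g y b a) := by
      filter_upwards [hX.mem_nhds hx] with y hy
      exact ((hsymm y hy).apply a b).symm
    rw [hev.fderiv_eq]
  rw [key d j r, key r d j, key r j d]
  ring

end Aux

/-- The polymomentum electromagnetic field of the autonomous
multi-time Hamilton space of electrodynamics is given by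
`F^{(i)}_{(a)j} = (1/2)[Δ^{(i)}_{(a)j} − Δ^{(j)}_{(a)i}]
  = (e/(8m₀²c)) 𝒜_{{i,j}}{h_{af} φ^{ir}[A^{(f)}_{(r):j} + A^{(f)}_{(j):r}]}`,
and the second electromagnetic component vanishes:
`f^{(i)(j)}_{(a)(b)} = (1/2)[ϑ^{(i)(j)}_{(a)(b)} − ϑ^{(j)(i)}_{(a)(b)}] = 0`, where
`ϑ^{(i)(j)}_{(a)(b)} = (1/(4m₀c)) h_{ab} φ^{ij}`. -/
theorem polymomentum_electromagnetic_field_of_electrodynamics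
    {m n : ℕ} (hm : 1 ≤ m) (hn : 1 ≤ n)
    (T : Set (Fin m → ℝ)) (X : Set (Fin n → ℝ)) (hT : IsOpen T) (hX : IsOpen X)
    (h : (Fin m → ℝ) → Matrix (Fin m) (Fin m) ℝ)
    (hsm : ∀ a b, ContDiffOn ℝ (⊤ : ℕ∞) (fun t => h t a b) T)
    (hpos : ∀ t ∈ T, (h t).PosDef)
    (φ : (Fin n → ℝ) → Matrix (Fin n) (Fin n) ℝ)
    (φsm : ∀ i j, ContDiffOn ℝ (⊤ : ℕ∞) (fun x => φ x i j) X)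
    (φsymm : ∀ x ∈ X, (φ x).IsSymm) (φinv : ∀ x ∈ X, IsUnit (φ x).det)
    (m₀ e c : ℝ) (hm₀ : m₀ ≠ 0) (hc : 0 < c)
    (A : Fin m → Fin n → (Fin m → ℝ) × (Fin n → ℝ) → ℝ)
    (hA : ∀ a i, ContDiffOn ℝ (⊤ : ℕ∞) (A a i) (T ×ˢ X)) :
    ∀ t ∈ T, ∀ x ∈ X, ∀ p : Fin m → Fin n → ℝ,
      -- the metrical deflection d-tensor `Δ^{(i)}_{(a)j} = h*_{af} φ^{ir} p^f_{r|j}`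
      let Δ : Fin m → Fin n → Fin n → ℝ := fun a i j =>
        ∑ f, ∑ r, ((4 * m₀ * c)⁻¹ * h t a f) * (φ x)⁻¹ i r *
          (deltaX φ A e m₀ (fun q => q.2.2 f r) j (t, x, p)
            - ∑ s, christoffel φ s r j x * p f s);
      -- `h_{af} φ^{ir} [A^{(f)}_{(r):j} + A^{(f)}_{(j):r}]`
      let G : Fin m → Fin n → Fin n → ℝ := fun a i j =>
        ∑ f, ∑ r, h t a f * (φ x)⁻¹ i r *
          ((pdx (A f r) j (t, x) - ∑ s, christoffel φ s r j x * A f s (t, x))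
            + (pdx (A f j) r (t, x) - ∑ s, christoffel φ s j r x * A f s (t, x)));
      (∀ a : Fin m, ∀ i j : Fin n,
        (1 / 2) * (Δ a i j - Δ a j i)
          = (e / (8 * m₀ ^ 2 * c)) * (G a i j - G a j i)) ∧
      (∀ a b : Fin m, ∀ i j : Fin n,
        (1 / 2) * ((1 / (4 * m₀ * c)) * h t a b * (φ x)⁻¹ i j
          - (1 / (4 * m₀ * c)) * h t a b * (φ x)⁻¹ j i) = 0) := by
  intro t ht x hx p Δ G
  have hγ : ∀ s r j : Fin n, christoffel φ s r j x = christoffel φ s j r x :=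
    fun s r j => christoffel_symm φ X hX φsymm s r j x hx
  have φisymm : ∀ i j : Fin n, (φ x)⁻¹ i j = (φ x)⁻¹ j i := by
    intro i j
    have hs : ((φ x)⁻¹).IsSymm := by
      have := (φsymm x hx)
      unfold Matrix.IsSymm at this ⊢
      rw [Matrix.transpose_nonsing_inv, this]
    exact ((hs.apply i j)).symm
  constructor
  · -- main identity
    have key : ∀ a : Fin m, ∀ i j : Fin n,
        Δ a i j = (e / (4 * m₀ ^ 2 * c)) * G a i j := by
      intro a i j
      show (∑ f, ∑ r, ((4 * m₀ * c)⁻¹ * h t a f) * (φ x)⁻¹ i r *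
          (deltaX φ A e m₀ (fun q => q.2.2 f r) j (t, x, p)
            - ∑ s, christoffel φ s r j x * p f s))
        = (e / (4 * m₀ ^ 2 * c)) * ∑ f, ∑ r, h t a f * (φ x)⁻¹ i r *
          ((pdx (A f r) j (t, x) - ∑ s, christoffel φ s r j x * A f s (t, x))
            + (pdx (A f j) r (t, x) - ∑ s, christoffel φ s j r x * A f s (t, x)))
      rw [Finset.mul_sum]
      apply Finset.sum_congr rfl
      intro f _
      rw [Finset.mul_sum]
      apply Finset.sum_congr rfl
      intro r _
      rw [deltaX_coord]
      unfold N2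
      simp only
      have expand : ∑ s, christoffel φ s r j x *
            ((2 * e / m₀) * A f s (t, x) - p f s)
          = (2 * e / m₀) * (∑ s, christoffel φ s r j x * A f s (t, x))
            - ∑ s, christoffel φ s r j x * p f s := by
        rw [Finset.mul_sum, ← Finset.sum_sub_distrib]
        exact Finset.sum_congr rfl fun s _ => by ring
      have hQ : ∑ s, christoffel φ s j r x * A f s (t, x)
          = ∑ s, christoffel φ s r j x * A f s (t, x) :=
        Finset.sum_congr rfl fun s _ => by rw [hγ s j r]
      rw [expand, hQ]
      have hc' : c ≠ 0 := hc.ne'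
      field_simp
      ring
    intro a i j
    rw [key a i j, key a j i]
    ring
  · intro a b i j
    rw [φisymm i j]
    ring

end
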